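/- arXiv:2512.17068 — 6 statements merged into one kernel-verified Lean document; each statement's English description precedes it below -/
import Mathlib

section
/- Let G be a group, A a trivial G-module, and n ≥ 1. For every (n−1)-cochain α: G^{n−1} → A and every commuting n-tuple 𝐠 = (g_1,…,g_n) ∈ X_n(G), the Dijkgraaf–Witten weight of the coboundary δα vanishes: Σ_{σ ∈ S_n} sgn(σ)·(δα)(g_{σ(1)},…,g_{σ(n)}) = 0. Consequently, for an n-cocycle ω, the value W_ω(𝐠) depends only on the cohomology class [ω] ∈ H^n(G,A). -/
namespace DT

variable {G : Type*} [Group G] {A : Type*} [AddCommGroup A]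

/-- Merge positions `i` and `i+1` of an `(n+1)`-tuple (bar-complex face map):
for `j < i` entry `g j`, at `j = i` entry `g i * g (i+1)`, for `j > i` entry `g (j+1)`. -/
def barMerge {n : ℕ} (g : Fin (n+1) → G) (i : Fin n) : Fin n → G :=
  fun j => if (j : ℕ) < (i : ℕ) then g j.castSucc
    else if (j : ℕ) = (i : ℕ) then g j.castSucc * g j.succ
    else g j.succ

/-- The inhomogeneous (bar) coboundary of an `n`-cochain with values in a trivial module:
`(δω)(g_1,…,g_{n+1}) = ω(g_2,…,g_{n+1}) + Σ_{i=1}^{n} (−1)^i ω(g_1,…,g_i g_{i+1},…,g_{n+1})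
 + (−1)^{n+1} ω(g_1,…,g_n)`. -/
def coboundary {n : ℕ} (ω : (Fin n → G) → A) : (Fin (n+1) → G) → A :=
  fun g => ω (fun j => g j.succ)
    + ∑ i : Fin n, ((-1 : ℤ) ^ ((i : ℕ) + 1)) • ω (barMerge g i)
    + ((-1 : ℤ) ^ (n+1)) • ω (fun j => g j.castSucc)

/-- An `n`-cocycle. -/
def IsCocycle {n : ℕ} (ω : (Fin n → G) → A) : Prop := coboundary ω = 0

/-- An `(n+1)`-coboundary. -/
def IsCoboundary {n : ℕ} (ω : (Fin (n+1) → G) → A) : Prop := ∃ α, ω = coboundary α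

/-- A commuting tuple. -/
def IsCommTuple {n : ℕ} (g : Fin n → G) : Prop := ∀ i j, g i * g j = g j * g i

/-- The Dijkgraaf–Witten weight `W_ω(𝐠) = Σ_{σ ∈ S_n} sgn(σ) • ω(g_{σ(1)},…,g_{σ(n)})`. -/
def dwWeight {n : ℕ} (ω : (Fin n → G) → A) (g : Fin n → G) : A :=
  ∑ σ : Equiv.Perm (Fin n), ((Equiv.Perm.sign σ : ℤ)) • ω (g ∘ σ)

end DT

/-!
On a commuting tuple, precomposing with the transposition `(i i+1)` leaves the `i`-th inner face
`α(…, g_i g_{i+1}, …)` of `δα` unchanged but flips the sign of the permutation, so the inner faces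
cancel in pairs in the alternating sum. The outer faces `α(g_2,…,g_{m+1})` and `α(g_1,…,g_m)`
differ by the cyclic rotation of `Fin (m+1)`, of sign `(-1)^m`, and enter `δα` with the signs `1`
and `(-1)^{m+1}`, so they cancel as well. The weight is additive in the cochain, hence
cohomologous cochains have the same weight.
-/

namespace DT

open Equiv Equiv.Perm

variable {G : Type*} {A : Type*} [AddCommGroup A]

section Weight

variable {n : ℕ}

def dwWeightHom (g : Fin n → G) : ((Fin n → G) → A) →+ A where
  toFun ω := dwWeight ω g
  map_zero' := by simp [dwWeight]
  map_add' ω ω' := by simp [dwWeight, smul_add, Finset.sum_add_distrib]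

@[simp]
lemma dwWeightHom_apply (g : Fin n → G) (ω : (Fin n → G) → A) :
    dwWeightHom g ω = dwWeight ω g :=
  rfl

lemma dwWeight_precomp_perm (ω : (Fin n → G) → A) (ρ : Perm (Fin n)) (g : Fin n → G) :
    dwWeight (fun q => ω (q ∘ ρ)) g = (sign ρ : ℤ) • dwWeight ω g := by
  unfold dwWeight
  rw [← Equiv.sum_comp (Equiv.mulRight ρ⁻¹), Finset.smul_sum]
  refine Finset.sum_congr rfl fun σ _ => ?_
  simp [smul_smul, mul_comm, Function.comp_assoc]

lemma dwWeight_eq_zero_of_comp_swap {ω : (Fin n → G) → A} {g : Fin n → G} {a b : Fin n}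
    (hab : a ≠ b) (h : ∀ σ : Perm (Fin n), ω (g ∘ σ ∘ swap a b) = ω (g ∘ σ)) :
    dwWeight ω g = 0 := by
  refine Finset.sum_ninvolution (· * swap a b) (fun σ => ?_) (fun σ _ => ?_)
    (fun _ => Finset.mem_univ _) (fun σ => by simp [mul_assoc])
  · simp only [Perm.sign_mul, sign_swap hab, coe_mul, Units.val_neg, mul_neg_one, neg_smul, h,
      add_neg_cancel]
  · simpa using hab

lemma dwWeight_tail {m : ℕ} (α : (Fin m → G) → A) (g : Fin (m+1) → G) :
    dwWeight (fun q => α (Fin.tail q)) g =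
      ((-1 : ℤ) ^ m) • dwWeight (fun q => α (Fin.init q)) g := by
  have tail_eq_init_rotate (q : Fin (m+1) → G) : Fin.tail q = Fin.init (q ∘ finRotate (m+1)) := by
    funext j
    simp [Fin.tail, Fin.init, Fin.coeSucc_eq_succ]
  simp only [tail_eq_init_rotate]
  rw [dwWeight_precomp_perm (fun q => α (Fin.init q)), sign_finRotate]
  simp

end Weight

variable [Group G]

lemma barMerge_comp_swap {m : ℕ} (q : Fin (m+1) → G) (i : Fin m)
    (h : Commute (q i.castSucc) (q i.succ)) :
    barMerge (q ∘ swap i.castSucc i.succ) i = barMerge q i := by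
  funext j
  simp only [barMerge, Function.comp_apply]
  rcases lt_trichotomy (j : ℕ) (i : ℕ) with hji | hji | hji
  · rw [if_pos hji, if_pos hji, swap_apply_of_ne_of_ne] <;> simp [Fin.ext_iff] <;> omega
  · obtain rfl : j = i := Fin.ext hji
    simp [h.eq.symm]
  · have hij : ¬ (j : ℕ) < i := by omega
    rw [if_neg hij, if_neg hji.ne', if_neg hij, if_neg hji.ne', swap_apply_of_ne_of_ne] <;>
      simp [Fin.ext_iff] <;> omega

lemma dwWeight_barMerge_eq_zero {m : ℕ} (β : (Fin m → G) → A) (i : Fin m)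
    {g : Fin (m+1) → G} (hg : IsCommTuple g) :
    dwWeight (fun q => β (barMerge q i)) g = 0 :=
  dwWeight_eq_zero_of_comp_swap Fin.castSucc_lt_succ.ne fun σ =>
    congrArg β (barMerge_comp_swap (g ∘ σ) i (hg _ _))

lemma coboundary_eq_sum {m : ℕ} (α : (Fin m → G) → A) :
    coboundary α = (fun q => α (Fin.tail q))
      + ∑ i : Fin m, ((-1 : ℤ) ^ ((i : ℕ) + 1)) • (fun q => α (barMerge q i))
      + ((-1 : ℤ) ^ (m+1)) • (fun q => α (Fin.init q)) := by
  funext q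
  simp only [coboundary, Pi.add_apply, Finset.sum_apply, Pi.smul_apply]
  rfl

theorem dwWeight_coboundary {m : ℕ} (α : (Fin m → G) → A) {g : Fin (m+1) → G}
    (hg : IsCommTuple g) : dwWeight (coboundary α) g = 0 := by
  rw [← dwWeightHom_apply, coboundary_eq_sum, map_add, map_add, map_sum, map_zsmul]
  simp only [map_zsmul, dwWeightHom_apply, dwWeight_barMerge_eq_zero _ _ hg, smul_zero,
    Finset.sum_const_zero, add_zero, dwWeight_tail]
  rw [pow_succ, mul_neg_one, neg_smul, add_neg_cancel]

end DT

open DT in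
/-- the DW weight of a coboundary vanishes on commuting tuples; consequently
the DW weight of a cocycle depends only on its cohomology class. -/
theorem stmt0 {G : Type*} [Group G] {A : Type*} [AddCommGroup A] (m : ℕ)
    (α : (Fin m → G) → A) (g : Fin (m+1) → G) (hg : IsCommTuple g) :
    dwWeight (coboundary α) g = 0 ∧
    ∀ ω ω' : (Fin (m+1) → G) → A, IsCocycle ω → IsCocycle ω' →
      (∃ β : (Fin m → G) → A, ω' = ω + coboundary β) →
      dwWeight ω' g = dwWeight ω g := by
  refine ⟨dwWeight_coboundary α hg, ?_⟩
  rintro ω _ _ _ ⟨β, rfl⟩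
  rw [← dwWeightHom_apply, map_add, dwWeightHom_apply, dwWeightHom_apply,
    dwWeight_coboundary β hg, add_zero]
end

section
/- Let G be a group, A a trivial G-module, n ≥ 1, ω an n-cocycle with values in A, (g_1,…,g_n) ∈ X_n(G) a commuting n-tuple, and k ∈ G. Then (k g_1 k^{−1}, …, k g_n k^{−1}) is again a commuting n-tuple and W_ω(k g_1 k^{−1}, …, k g_n k^{−1}) = W_ω(g_1,…,g_n); that is, the Dijkgraaf–Witten weight of a cocycle is invariant under simultaneous conjugation of the tuple. -/
/-!
For every permutation `σ` and every position `i`, apply the cocycle identity to the tuple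
`(k g_{σ0} k⁻¹, …, k g_{σ(i-1)} k⁻¹, k, g_{σi}, …, g_{σm})` and take the sum of all these
identities weighted by `sgn σ · (-1)^i`. The inner faces cancel: merging `k` with a neighbour
gives the same tuple from positions `i` and `i+1`, and every other inner face is unchanged when two
adjacent, commuting entries are swapped, so it cancels against the term for `σ` composed with that
transposition. The first face at position `i+1` is the last face at position `i` for `σ` composed
with the rotation of `Fin (m+1)`, of sign `(-1)^m`; these cancel as well. What survives is the first
face at `i = 0`, giving `W_ω(g)`, and the last face at `i = m+1`, giving `-W_ω(k g k⁻¹)`.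
-/

namespace Equiv.Perm

variable {α : Type*} [Fintype α] [DecidableEq α] {A : Type*} [AddCommGroup A]

theorem sum_sign_smul_mul_right (F : Perm α → A) (τ : Perm α) :
    ∑ σ, (sign σ : ℤ) • F (σ * τ) = (sign τ : ℤ) • ∑ σ, (sign σ : ℤ) • F σ := by
  rw [Finset.smul_sum]
  refine Fintype.sum_equiv (Equiv.mulRight τ) _ _ fun σ => ?_
  rw [coe_mulRight, sign_mul, smul_smul, ← Units.val_mul, ← mul_assoc, mul_right_comm,
    Int.units_mul_self, one_mul]

theorem sum_sign_smul_eq_zero_of_mul_swap {F : Perm α → A} {a b : α} (hab : a ≠ b)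
    (hF : ∀ σ, F (σ * swap a b) = F σ) : ∑ σ, (sign σ : ℤ) • F σ = 0 := by
  refine Finset.sum_involution (fun σ _ => σ * swap a b) (fun σ _ => ?_) (fun σ _ _ => ?_)
    (fun _ _ => Finset.mem_univ _) (fun σ _ => by rw [mul_assoc, swap_mul_self, mul_one])
  · rw [hF, sign_mul, sign_swap hab, Units.val_mul, Units.val_neg, Units.val_one, mul_neg_one,
      neg_smul, add_neg_cancel]
  · rw [Ne, mul_eq_left, swap_eq_one_iff]
    exact hab

end Equiv.Perm

namespace DT

open Equiv Perm

section dwWeight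

variable {G : Type*} {A : Type*} [AddCommGroup A] {n : ℕ}
variable (Φ Ψ : (Fin n → G) → A) (g : Fin n → G)

theorem dwWeight_add : dwWeight (fun f => Φ f + Ψ f) g = dwWeight Φ g + dwWeight Ψ g := by
  simp only [dwWeight, smul_add, Finset.sum_add_distrib]

theorem dwWeight_sub : dwWeight (fun f => Φ f - Ψ f) g = dwWeight Φ g - dwWeight Ψ g := by
  simp only [dwWeight, smul_sub, Finset.sum_sub_distrib]

theorem dwWeight_zsmul (c : ℤ) : dwWeight (fun f => c • Φ f) g = c • dwWeight Φ g := by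
  simp only [dwWeight, Finset.smul_sum, smul_comm c]

theorem dwWeight_sum {ι : Type*} (s : Finset ι) (Φ : ι → (Fin n → G) → A) :
    dwWeight (fun f => ∑ x ∈ s, Φ x f) g = ∑ x ∈ s, dwWeight (Φ x) g := by
  simp only [dwWeight, Finset.smul_sum]
  exact Finset.sum_comm

theorem dwWeight_comp_perm (τ : Perm (Fin n)) :
    dwWeight (fun f => Φ (f ∘ τ)) g = (sign τ : ℤ) • dwWeight Φ g :=
  sum_sign_smul_mul_right (fun σ => Φ (g ∘ σ)) τ

end dwWeight

variable {G : Type*} [Group G] {A : Type*} [AddCommGroup A] {n : ℕ}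

theorem IsCommTuple.conj {g : Fin n → G} (hg : IsCommTuple g) (k : G) :
    IsCommTuple (fun i => k * g i * k⁻¹) := by
  intro i j
  simp only [conj_mul, hg i j]

theorem dwWeight_comp_conj (Φ : (Fin n → G) → A) (g : Fin n → G) (k : G) :
    dwWeight (fun f => Φ (fun p => k * f p * k⁻¹)) g = dwWeight Φ (fun p => k * g p * k⁻¹) :=
  rfl

theorem barMerge_of_lt (g : Fin (n+1) → G) {i p : Fin n} (h : (p : ℕ) < i) :
    barMerge g i p = g p.castSucc :=
  if_pos h

theorem barMerge_self (g : Fin (n+1) → G) (p : Fin n) :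
    barMerge g p p = g p.castSucc * g p.succ := by
  rw [barMerge, if_neg (lt_irrefl _), if_pos rfl]

theorem barMerge_of_gt (g : Fin (n+1) → G) {i p : Fin n} (h : (i : ℕ) < p) :
    barMerge g i p = g p.succ := by
  rw [barMerge, if_neg (by omega), if_neg (by omega)]

theorem finRotate_ofNat (t : ℕ) :
    finRotate (n+1) (Fin.ofNat (n+1) t) = Fin.ofNat (n+1) (t+1) := by
  rw [finRotate_apply]
  ext
  simp [Fin.val_add, Nat.add_mod]

theorem swap_apply_ofNat_of_ne {a b : Fin (n+1)} {t : ℕ} (ht : t < n+1) (ha : t ≠ a)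
    (hb : t ≠ b) : swap a b (Fin.ofNat (n+1) t) = Fin.ofNat (n+1) t :=
  swap_apply_of_ne_of_ne (fun h => ha (by simp [← h, Nat.mod_eq_of_lt ht]))
    (fun h => hb (by simp [← h, Nat.mod_eq_of_lt ht]))

/-- The tuple `(k f₀ k⁻¹, …, k f_{i-1} k⁻¹, k, f_i, …, f_n)`. (`Fin.ofNat` never wraps around
here; it only spares dependent indices.) -/
def conjInsert (k : G) (f : Fin (n+1) → G) (i : Fin (n+2)) : Fin (n+2) → G := fun q =>
  if (q : ℕ) < i then k * f (Fin.ofNat (n+1) q) * k⁻¹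
  else if (q : ℕ) = i then k
  else f (Fin.ofNat (n+1) (q - 1))

section conjInsert

variable (k : G) (f : Fin (n+1) → G)

theorem conjInsert_of_lt {i q : Fin (n+2)} (h : (q : ℕ) < i) :
    conjInsert k f i q = k * f (Fin.ofNat (n+1) q) * k⁻¹ :=
  if_pos h

theorem conjInsert_of_eq {i q : Fin (n+2)} (h : (q : ℕ) = i) : conjInsert k f i q = k := by
  rw [conjInsert, if_neg (by omega), if_pos h]

theorem conjInsert_of_gt {i q : Fin (n+2)} (h : (i : ℕ) < q) :
    conjInsert k f i q = f (Fin.ofNat (n+1) (q - 1)) := by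
  rw [conjInsert, if_neg (by omega), if_neg (by omega)]

theorem conjInsert_zero_succ : (fun p : Fin (n+1) => conjInsert k f 0 p.succ) = f :=
  funext fun p => by simp [conjInsert_of_gt k f (show ((0 : Fin (n+2)) : ℕ) < p.succ by simp)]

theorem conjInsert_last_castSucc :
    (fun p : Fin (n+1) => conjInsert k f (Fin.last (n+1)) p.castSucc) = fun p => k * f p * k⁻¹ :=
  funext fun p => by simp [conjInsert_of_lt k f (Fin.castSucc_lt_last p)]

theorem conjInsert_succ_succ (i : Fin (n+1)) :
    (fun p : Fin (n+1) => conjInsert k f i.succ p.succ)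
      = fun p => conjInsert k (f ∘ finRotate (n+1)) i.castSucc p.castSucc := by
  funext p
  rcases lt_trichotomy p i with h | h | h
  · rw [conjInsert_of_lt k f (q := p.succ) (by simpa using h),
      conjInsert_of_lt _ _ (q := p.castSucc) (by simpa using h)]
    simp only [Function.comp_apply, Fin.val_succ, Fin.val_castSucc, finRotate_ofNat]
  · rw [conjInsert_of_eq k f (q := p.succ) (by simp [h]),
      conjInsert_of_eq _ _ (q := p.castSucc) (by simp [h])]
  · rw [conjInsert_of_gt k f (q := p.succ) (by simpa using h),
      conjInsert_of_gt _ _ (q := p.castSucc) (by simpa using h)]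
    simp only [Function.comp_apply, Fin.val_succ, Fin.val_castSucc, finRotate_ofNat]
    congr 2
    have : (i : ℕ) < p := h
    omega

theorem barMerge_conjInsert_castSucc (j : Fin (n+1)) :
    barMerge (conjInsert k f j.castSucc) j = barMerge (conjInsert k f j.succ) j := by
  funext p
  rcases lt_trichotomy p j with h | rfl | h
  · have h' : (p : ℕ) < j := h
    rw [barMerge_of_lt _ h, barMerge_of_lt _ h, conjInsert_of_lt k f (by simpa using h'),
      conjInsert_of_lt k f (q := p.castSucc) (by simp; omega)]
  · rw [barMerge_self, barMerge_self, conjInsert_of_eq k f (i := p.castSucc) rfl,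
      conjInsert_of_gt k f (i := p.castSucc) (q := p.succ) (by simp),
      conjInsert_of_lt k f (i := p.succ) (q := p.castSucc) (by simp),
      conjInsert_of_eq k f (i := p.succ) rfl]
    simp
  · have h' : (j : ℕ) < p := h
    rw [barMerge_of_gt _ h, barMerge_of_gt _ h,
      conjInsert_of_gt k f (q := p.succ) (by simp; omega),
      conjInsert_of_gt k f (q := p.succ) (by simpa using h')]

theorem conjInsert_comp_swap_apply {a b : Fin (n+1)} {i q : Fin (n+2)}
    (hlt : (q : ℕ) < i → (q : ℕ) ≠ a ∧ (q : ℕ) ≠ b)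
    (hgt : (i : ℕ) < q → (q : ℕ) - 1 ≠ a ∧ (q : ℕ) - 1 ≠ b) :
    conjInsert k (f ∘ swap a b) i q = conjInsert k f i q := by
  rcases lt_trichotomy (q : ℕ) i with h | h | h
  · rw [conjInsert_of_lt _ _ h, conjInsert_of_lt _ _ h, Function.comp_apply,
      swap_apply_ofNat_of_ne (by omega) (hlt h).1 (hlt h).2]
  · rw [conjInsert_of_eq _ _ h, conjInsert_of_eq _ _ h]
  · rw [conjInsert_of_gt _ _ h, conjInsert_of_gt _ _ h, Function.comp_apply,
      swap_apply_ofNat_of_ne (by omega) (hgt h).1 (hgt h).2]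

theorem barMerge_conjInsert_comp_swap_of_lt {a b : Fin (n+1)} {i : Fin (n+2)} {j : Fin (n+1)}
    (ha : (a : ℕ) = j) (hb : (b : ℕ) = j + 1) (hij : (j : ℕ) + 2 ≤ i)
    (hf : f a * f b = f b * f a) :
    barMerge (conjInsert k (f ∘ swap a b) i) j = barMerge (conjInsert k f i) j := by
  funext p
  rcases lt_trichotomy p j with h | rfl | h
  · have h' : (p : ℕ) < j := h
    rw [barMerge_of_lt _ h, barMerge_of_lt _ h]
    exact conjInsert_comp_swap_apply k f (by simp; omega) (by simp; omega)
  · have hpa : Fin.ofNat (n+1) p = a := Fin.ext (by simp [ha])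
    have hpb : Fin.ofNat (n+1) (p + 1) = b := Fin.ext (by simp [hb]; omega)
    rw [barMerge_self, barMerge_self, conjInsert_of_lt _ _ (q := p.castSucc) (by simp; omega),
      conjInsert_of_lt _ _ (q := p.succ) (by simp; omega),
      conjInsert_of_lt _ _ (q := p.castSucc) (by simp; omega),
      conjInsert_of_lt _ _ (q := p.succ) (by simp; omega)]
    simp only [Function.comp_apply, Fin.val_castSucc, Fin.val_succ, hpa, hpb, swap_apply_left,
      swap_apply_right, conj_mul, hf]
  · have h' : (j : ℕ) < p := h
    rw [barMerge_of_gt _ h, barMerge_of_gt _ h]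
    exact conjInsert_comp_swap_apply k f (by simp; omega) (by simp; omega)

theorem barMerge_conjInsert_comp_swap_of_gt {a b : Fin (n+1)} {i : Fin (n+2)} {j : Fin (n+1)}
    (ha : (a : ℕ) + 1 = j) (hb : (b : ℕ) = j) (hij : (i : ℕ) < j)
    (hf : f a * f b = f b * f a) :
    barMerge (conjInsert k (f ∘ swap a b) i) j = barMerge (conjInsert k f i) j := by
  funext p
  rcases lt_trichotomy p j with h | rfl | h
  · have h' : (p : ℕ) < j := h
    rw [barMerge_of_lt _ h, barMerge_of_lt _ h]
    exact conjInsert_comp_swap_apply k f (by simp; omega) (by simp; omega)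
  · have hpa : Fin.ofNat (n+1) (p - 1) = a :=
      Fin.ext (by simp [← ha])
    have hpb : Fin.ofNat (n+1) p = b := Fin.ext (by simp [hb])
    rw [barMerge_self, barMerge_self, conjInsert_of_gt _ _ (q := p.castSucc) (by simp; omega),
      conjInsert_of_gt _ _ (q := p.succ) (by simp; omega),
      conjInsert_of_gt _ _ (q := p.castSucc) (by simp; omega),
      conjInsert_of_gt _ _ (q := p.succ) (by simp; omega)]
    simp only [Function.comp_apply, Fin.val_castSucc, Fin.val_succ, Nat.add_sub_cancel, hpa, hpb,
      swap_apply_left, swap_apply_right, hf]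
  · have h' : (j : ℕ) < p := h
    rw [barMerge_of_gt _ h, barMerge_of_gt _ h]
    exact conjInsert_comp_swap_apply k f (by simp; omega) (by simp; omega)

end conjInsert

def innerFaceSum (ω : (Fin (n+1) → G) → A) (k : G) (f : Fin (n+1) → G) : A :=
  ∑ i : Fin (n+2), ∑ j : Fin (n+1),
    ((-1 : ℤ) ^ (i : ℕ) * (-1) ^ ((j : ℕ) + 1)) • ω (barMerge (conjInsert k f i) j)

def lastFaceSum (ω : (Fin (n+1) → G) → A) (k : G) (f : Fin (n+1) → G) : A :=
  ∑ i : Fin (n+1), ((-1 : ℤ) ^ (i : ℕ)) • ω (fun p => conjInsert k f i.castSucc p.castSucc)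

section faceSums

variable (ω : (Fin (n+1) → G) → A) (k : G)

theorem sum_firstFace_conjInsert (f : Fin (n+1) → G) :
    ∑ i : Fin (n+2), ((-1 : ℤ) ^ (i : ℕ)) • ω (fun p => conjInsert k f i p.succ)
      = ω f - lastFaceSum ω k (f ∘ finRotate (n+1)) := by
  rw [Fin.sum_univ_succ, conjInsert_zero_succ, lastFaceSum, sub_eq_add_neg,
    ← Finset.sum_neg_distrib]
  simp [Fin.val_succ, pow_succ, conjInsert_succ_succ]

theorem sum_lastFace_conjInsert (f : Fin (n+1) → G) :
    ∑ i : Fin (n+2), ((-1 : ℤ) ^ (i : ℕ) * (-1) ^ (n+1+1)) •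
        ω (fun p => conjInsert k f i p.castSucc)
      = (-1 : ℤ) ^ n • lastFaceSum ω k f - ω (fun p => k * f p * k⁻¹) := by
  rw [Fin.sum_univ_castSucc, conjInsert_last_castSucc, lastFaceSum, Finset.smul_sum,
    sub_eq_add_neg]
  simp [pow_succ, smul_smul, mul_comm, ← mul_pow]

theorem sum_coboundary_conjInsert (f : Fin (n+1) → G) :
    ∑ i : Fin (n+2), ((-1 : ℤ) ^ (i : ℕ)) • coboundary ω (conjInsert k f i)
      = ω f - ω (fun p => k * f p * k⁻¹) + innerFaceSum ω k f
        + (-1 : ℤ) ^ n • lastFaceSum ω k f - lastFaceSum ω k (f ∘ finRotate (n+1)) := by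
  simp only [coboundary, smul_add, Finset.sum_add_distrib, Finset.smul_sum, smul_smul,
    sum_firstFace_conjInsert, sum_lastFace_conjInsert, innerFaceSum]
  abel

theorem dwWeight_barMerge_conjInsert_eq_zero {g : Fin (n+1) → G} (hg : IsCommTuple g)
    {i : Fin (n+2)} {j : Fin (n+1)} (hij : (j : ℕ) + 2 ≤ i ∨ (i : ℕ) < j) :
    dwWeight (fun f => ω (barMerge (conjInsert k f i) j)) g = 0 := by
  have hi := i.isLt
  rcases hij with hij | hij
  · let a : Fin (n+1) := ⟨j, by omega⟩
    let b : Fin (n+1) := ⟨j + 1, by omega⟩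
    refine sum_sign_smul_eq_zero_of_mul_swap (a := a) (b := b) (by simp [a, b, Fin.ext_iff])
      fun σ => ?_
    exact congrArg ω (barMerge_conjInsert_comp_swap_of_lt k (g ∘ σ) rfl rfl hij (hg _ _))
  · let a : Fin (n+1) := ⟨j - 1, by omega⟩
    refine sum_sign_smul_eq_zero_of_mul_swap (a := a) (b := j) (by simp [a, Fin.ext_iff]; omega)
      fun σ => ?_
    exact congrArg ω (barMerge_conjInsert_comp_swap_of_gt k (g ∘ σ) (by simp [a]; omega) rfl hij
      (hg _ _))

theorem dwWeight_innerFaceSum {g : Fin (n+1) → G} (hg : IsCommTuple g) :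
    dwWeight (innerFaceSum ω k) g = 0 := by
  unfold innerFaceSum
  simp only [dwWeight_sum, dwWeight_zsmul]
  rw [Finset.sum_comm]
  refine Finset.sum_eq_zero fun j _ => ?_
  rw [Fintype.sum_eq_add j.castSucc j.succ Fin.castSucc_lt_succ.ne fun i hi => by
    rw [dwWeight_barMerge_conjInsert_eq_zero ω k hg (by simp [Fin.ext_iff] at hi; omega),
      smul_zero]]
  simp only [barMerge_conjInsert_castSucc, Fin.val_castSucc, Fin.val_succ, pow_succ, ← add_smul]
  convert zero_smul ℤ _ using 2
  ring

end faceSums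

end DT

open DT in
/-- the DW weight of a cocycle is invariant under simultaneous conjugation
of the commuting tuple. -/
theorem stmt1 {G : Type*} [Group G] {A : Type*} [AddCommGroup A] (m : ℕ)
    (ω : (Fin (m+1) → G) → A) (hω : IsCocycle ω)
    (g : Fin (m+1) → G) (hg : IsCommTuple g) (k : G) :
    IsCommTuple (fun i => k * g i * k⁻¹) ∧
    dwWeight ω (fun i => k * g i * k⁻¹) = dwWeight ω g := by
  refine ⟨hg.conj k, ?_⟩
  have hδ : coboundary ω = 0 := hω
  have hzero : dwWeight (fun f => ∑ i : Fin (m+2), ((-1 : ℤ) ^ (i : ℕ)) •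
      coboundary ω (conjInsert k f i)) g = 0 := by
    simp [dwWeight, hδ]
  simp only [sum_coboundary_conjInsert, dwWeight_add, dwWeight_sub, dwWeight_zsmul,
    dwWeight_comp_perm (lastFaceSum ω k), dwWeight_comp_conj, dwWeight_innerFaceSum ω k hg,
    sign_finRotate, Nat.add_sub_cancel, Units.val_pow_eq_pow_val, Units.val_neg, Units.val_one,
    add_zero, add_sub_cancel_right, sub_eq_zero] at hzero
  exact hzero.symm
end

section
/- Let G be a finite group and n ≥ 2. For every commuting n-tuple (g_1,…,g_n) ∈ X_n(G), with B = ⟨g_1,…,g_n⟩ the abelian subgroup it generates, the homology class of the cycle Σ_{σ ∈ S_n} sgn(σ)·[g_{σ(1)}|…|g_{σ(n)}] in H_n(G,ℤ) lies in the image of the map H_n(B,ℤ) → H_n(G,ℤ) induced by the inclusion B ↪ G. Consequently the image of Z_{0n} in H_n(G,ℤ) is contained in I_n(G), and the quotient map H_n(G,ℤ) → Sha_n(G) factors through H_{0n}(G,ℤ); that is, Sha_n(G) is a quotient of H_{0n}(G,ℤ). -/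
namespace DT

/-- The bar chain group `C_n(G)`: the free abelian group on `n`-tuples `[g_1|…|g_n]`. -/
abbrev BarChain (G : Type*) (n : ℕ) := (Fin n → G) →₀ ℤ

variable (G : Type*) [Group G]

/-- The bar differential `∂_{n+1} : C_{n+1}(G) → C_n(G)`,
`∂[g_1|…|g_{n+1}] = [g_2|…|g_{n+1}] + Σ_{i=1}^{n} (−1)^i [g_1|…|g_i g_{i+1}|…|g_{n+1}]
 + (−1)^{n+1} [g_1|…|g_n]`. -/
noncomputable def barD (n : ℕ) : BarChain G (n+1) →ₗ[ℤ] BarChain G n :=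
  (Finsupp.lift (BarChain G n) ℤ (Fin (n+1) → G)) (fun g =>
    Finsupp.single (fun j => g j.succ) 1
    + ∑ i : Fin n, ((-1 : ℤ) ^ ((i : ℕ) + 1)) • Finsupp.single (barMerge g i) 1
    + ((-1 : ℤ) ^ (n+1)) • Finsupp.single (fun j => g j.castSucc) 1)

/-- The `(n+1)`-cycles `Z_{n+1} = ker ∂_{n+1}`. -/
noncomputable def cycles (n : ℕ) : Submodule ℤ (BarChain G (n+1)) := LinearMap.ker (barD G n)

/-- The `(n+1)`-boundaries `B_{n+1} = im ∂_{n+2}`. -/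
noncomputable def boundaries (n : ℕ) : Submodule ℤ (BarChain G (n+1)) :=
  LinearMap.range (barD G (n+1))

/-- The alternating chain `Σ_{σ ∈ S_n} sgn(σ)·[g_{σ(1)}|…|g_{σ(n)}]`. -/
noncomputable def altCycle {n : ℕ} (g : Fin n → G) : BarChain G n :=
  ∑ σ : Equiv.Perm (Fin n), ((Equiv.Perm.sign σ : ℤ)) • Finsupp.single (g ∘ σ) (1 : ℤ)

/-- `Z_{0n} ⊆ C_n(G)`: the subgroup generated by the alternating chains of commuting tuples. -/
noncomputable def Z0 (n : ℕ) : Submodule ℤ (BarChain G n) :=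
  Submodule.span ℤ {x | ∃ g : Fin n → G, IsCommTuple g ∧ x = altCycle G g}

/-- Integral homology `H_{n+1}(G,ℤ) = Z_{n+1}/B_{n+1}`. -/
def Hgrp (n : ℕ) := cycles G n ⧸ ((boundaries G n).comap (cycles G n).subtype)

/-- `H_{0,n+1}(G,ℤ) = Z_{n+1}/(Z_{0,n+1} + B_{n+1})`. -/
def H0grp (n : ℕ) :=
  cycles G n ⧸ ((Z0 G (n+1) ⊔ boundaries G n).comap (cycles G n).subtype)

noncomputable instance (n : ℕ) : AddCommGroup (Hgrp G n) := by unfold Hgrp; infer_instance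
noncomputable instance (n : ℕ) : AddCommGroup (H0grp G n) := by unfold H0grp; infer_instance

/-- The natural projection `H_{n+1}(G,ℤ) → H_{0,n+1}(G,ℤ)`. -/
noncomputable def projH (n : ℕ) : Hgrp G n →ₗ[ℤ] H0grp G n :=
  Submodule.mapQ _ _ LinearMap.id
    (by
      intro x hx
      exact Submodule.mem_comap.mpr
        (Submodule.mem_sup_right (Submodule.mem_comap.mp hx)))

end DT

namespace DT

variable (G : Type*) [Group G]

/-- The submodule of `C_{n+1}(G)` generated by the boundaries together with the
pushforwards of cycles of abelian subgroups of `G`; modulo boundaries this is `I_{n+1}(G)`,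
and `Sha_{n+1}(G) = Z_{n+1}/Isub`. -/
noncomputable def Isub (n : ℕ) : Submodule ℤ (BarChain G (n+1)) :=
  boundaries G n ⊔ Submodule.span ℤ
    {x | ∃ B : Subgroup G, (∀ a ∈ B, ∀ b ∈ B, a * b = b * a) ∧
      ∃ w : BarChain ↥B (n+1), barD ↥B n w = 0 ∧
        x = Finsupp.mapDomain (fun t : Fin (n+1) → ↥B => fun i => ((t i : G))) w}

end DT


namespace DT

section Aux
variable {G : Type*} [Group G]

lemma comp_swap_barMerge {n : ℕ} {g : Fin (n+1) → G} (hg : IsCommTuple g)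
    (σ : Equiv.Perm (Fin (n+1))) (i : Fin n) :
    barMerge (g ∘ (σ * Equiv.swap i.castSucc i.succ)) i = barMerge (g ∘ σ) i := by
  funext j
  simp only [barMerge, Function.comp_apply, Equiv.Perm.mul_apply]
  split_ifs with h1 h2
  · rw [Equiv.swap_apply_of_ne_of_ne]
    · exact fun h => by have := congrArg Fin.val h; simp at this; omega
    · exact fun h => by have := congrArg Fin.val h; simp at this; omega
  · have hji : j = i := Fin.ext h2
    subst hji
    rw [Equiv.swap_apply_left, Equiv.swap_apply_right]
    exact hg _ _
  · rw [Equiv.swap_apply_of_ne_of_ne]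
    · exact fun h => by have := congrArg Fin.val h; simp at this; omega
    · exact fun h => by have := congrArg Fin.val h; simp at this; omega

lemma sum_merge_zero {n : ℕ} {g : Fin (n+1) → G} (hg : IsCommTuple g) (i : Fin n) :
    ∑ σ : Equiv.Perm (Fin (n+1)), ((Equiv.Perm.sign σ : ℤ)) •
      (Finsupp.single (barMerge (g ∘ σ) i) (1:ℤ)) = 0 := by
  have hne : i.castSucc ≠ i.succ := by
    intro h; have := congrArg Fin.val h; simp at this
  apply Finset.sum_involution (fun σ _ => σ * Equiv.swap i.castSucc i.succ)
  · intro σ _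
    rw [comp_swap_barMerge hg σ i, map_mul, Equiv.Perm.sign_swap hne]
    push_cast
    rw [mul_neg_one, neg_smul, add_neg_cancel]
  · intro σ _ _ h
    apply hne
    have h1 : Equiv.swap i.castSucc i.succ = 1 := mul_left_cancel (h.trans (mul_one σ).symm)
    have h2 := congrArg (fun e : Equiv.Perm (Fin (n+1)) => e i.castSucc) h1
    simpa [Equiv.swap_apply_left] using h2.symm
  · intro σ _; exact Finset.mem_univ _
  · intro σ _
    rw [mul_assoc, Equiv.swap_mul_self, mul_one]

omit [Group G] in
lemma end_terms {n : ℕ} (g : Fin (n+1) → G) :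
    ∑ σ : Equiv.Perm (Fin (n+1)), ((Equiv.Perm.sign σ : ℤ)) •
      (((-1:ℤ)^(n+1)) • Finsupp.single (fun j : Fin n => (g ∘ σ) j.castSucc) (1:ℤ))
    = - ∑ σ : Equiv.Perm (Fin (n+1)), ((Equiv.Perm.sign σ : ℤ)) •
      Finsupp.single (fun j : Fin n => (g ∘ σ) j.succ) (1:ℤ) := by
  rw [← Finset.sum_neg_distrib]
  symm
  refine Fintype.sum_equiv (Equiv.mulRight (finRotate (n+1))) _ _ ?_
  intro σ
  have harg : (fun j : Fin n => (g ∘ ⇑(σ * finRotate (n+1))) j.castSucc)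
      = fun j : Fin n => (g ∘ ⇑σ) j.succ := by
    funext j
    simp only [Function.comp_apply, Equiv.Perm.mul_apply, finRotate_succ_apply,
      Fin.coeSucc_eq_succ]
  have hsign : ((Equiv.Perm.sign (σ * finRotate (n+1)) : ℤ))
      = (Equiv.Perm.sign σ : ℤ) * (-1)^n := by
    rw [map_mul, sign_finRotate]; push_cast; ring
  simp only [Equiv.coe_mulRight, harg, hsign]
  rw [smul_smul]
  have : (Equiv.Perm.sign σ : ℤ) * (-1)^n * (-1)^(n+1) = -(Equiv.Perm.sign σ : ℤ) := by
    rw [mul_assoc, ← pow_add, Odd.neg_one_pow ⟨n, by ring⟩, mul_neg_one]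
  rw [this, neg_smul]

lemma barD_single (n : ℕ) (h : Fin (n+1) → G) :
    barD G n (Finsupp.single h 1) =
      Finsupp.single (fun j => h j.succ) 1
      + ∑ i : Fin n, ((-1 : ℤ) ^ ((i : ℕ) + 1)) • Finsupp.single (barMerge h i) 1
      + ((-1 : ℤ) ^ (n+1)) • Finsupp.single (fun j => h j.castSucc) 1 := by
  simp only [barD, Finsupp.lift_apply]
  rw [Finsupp.sum_single_index, one_smul]
  rw [zero_smul]

lemma barD_altCycle {n : ℕ} {g : Fin (n+1) → G} (hg : IsCommTuple g) :
    barD G n (altCycle G g) = 0 := by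
  unfold altCycle
  rw [map_sum]
  have hterm : ∀ σ : Equiv.Perm (Fin (n+1)),
      barD G n ((Equiv.Perm.sign σ : ℤ) • Finsupp.single (g ∘ σ) (1:ℤ))
      = (Equiv.Perm.sign σ : ℤ) • Finsupp.single (fun j : Fin n => (g ∘ σ) j.succ) (1:ℤ)
        + (∑ i : Fin n, ((-1:ℤ)^((i:ℕ)+1)) •
            ((Equiv.Perm.sign σ : ℤ) • Finsupp.single (barMerge (g ∘ σ) i) (1:ℤ)))
        + (Equiv.Perm.sign σ : ℤ) •
            (((-1:ℤ)^(n+1)) • Finsupp.single (fun j : Fin n => (g ∘ σ) j.castSucc) (1:ℤ)) := by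
    intro σ
    rw [map_smul, barD_single, smul_add, smul_add, Finset.smul_sum]
    congr 2
    exact Finset.sum_congr rfl fun i _ => smul_comm _ _ _
  rw [Finset.sum_congr rfl fun σ _ => hterm σ]
  rw [Finset.sum_add_distrib, Finset.sum_add_distrib]
  have hmid : (∑ σ : Equiv.Perm (Fin (n+1)), ∑ i : Fin n, ((-1:ℤ)^((i:ℕ)+1)) •
      ((Equiv.Perm.sign σ : ℤ) • Finsupp.single (barMerge (g ∘ σ) i) (1:ℤ))) = 0 := by
    rw [Finset.sum_comm]
    refine Finset.sum_eq_zero fun i _ => ?_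
    rw [← Finset.smul_sum, sum_merge_zero hg i, smul_zero]
  rw [hmid, end_terms, add_zero, add_neg_cancel]

lemma mapDomain_altCycle (B : Subgroup G) {n : ℕ} (g' : Fin n → B) :
    Finsupp.mapDomain (fun t : Fin n → ↥B => fun i => ((t i : G))) (altCycle ↥B g')
      = altCycle G (fun i => (g' i : G)) := by
  unfold altCycle
  rw [← Finsupp.lmapDomain_apply ℤ ℤ, map_sum]
  refine Finset.sum_congr rfl fun σ _ => ?_
  rw [map_smul, Finsupp.lmapDomain_apply, Finsupp.mapDomain_single]
  rfl

lemma closure_comm {s : Set G} (hs : ∀ a ∈ s, ∀ b ∈ s, a*b = b*a) :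
    ∀ a ∈ Subgroup.closure s, ∀ b ∈ Subgroup.closure s, a*b = b*a := by
  intro a ha b hb
  exact Subgroup.closure_induction₂
    (p := fun x y _ _ => x * y = y * x)
    (fun x y hx hy => hs x hx y hy)
    (fun x _ => (Commute.one_left x).eq)
    (fun x _ => (Commute.one_right x).eq)
    (fun x y z _ _ _ h1 h2 => (Commute.mul_left h1 h2).eq)
    (fun y z x _ _ _ h1 h2 => (Commute.mul_right h1 h2).eq)
    (fun x y _ _ h => (Commute.inv_left h).eq)
    (fun x y _ _ h => (Commute.inv_right h).eq)
    ha hb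

end Aux

end DT

open DT in
/-- the alternating cycle of a commuting tuple represents, modulo boundaries,
a pushforward of a cycle of the abelian subgroup generated by the tuple; hence the image
of `Z₀ₙ` in `Hₙ(G,ℤ)` lies in `Iₙ(G)` and `Shaₙ(G)` is a quotient of `H₀ₙ(G,ℤ)`. -/
theorem stmt8 (G : Type*) [Group G] [Finite G] (m : ℕ) :
    (∀ g : Fin (m+2) → G, IsCommTuple g →
      ∃ w : BarChain ↥(Subgroup.closure (Set.range g)) (m+2),
        barD ↥(Subgroup.closure (Set.range g)) (m+1) w = 0 ∧
        altCycle G g - Finsupp.mapDomain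
          (fun t : Fin (m+2) → ↥(Subgroup.closure (Set.range g)) => fun i => ((t i : G))) w
          ∈ boundaries G (m+1)) ∧
    Z0 G (m+2) ≤ Isub G (m+1) ∧
    Z0 G (m+2) ⊔ boundaries G (m+1) ≤ Isub G (m+1) := by
  have key : ∀ g : Fin (m+2) → G, IsCommTuple g →
      ∃ w : BarChain ↥(Subgroup.closure (Set.range g)) (m+2),
        barD ↥(Subgroup.closure (Set.range g)) (m+1) w = 0 ∧
        altCycle G g - Finsupp.mapDomain
          (fun t : Fin (m+2) → ↥(Subgroup.closure (Set.range g)) => fun i => ((t i : G))) w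
          ∈ boundaries G (m+1) := by
    intro g hg
    have hmem : ∀ i, g i ∈ Subgroup.closure (Set.range g) :=
      fun i => Subgroup.subset_closure ⟨i, rfl⟩
    refine ⟨altCycle ↥(Subgroup.closure (Set.range g)) (fun i => ⟨g i, hmem i⟩), ?_, ?_⟩
    · exact barD_altCycle (fun i j => Subtype.ext (hg i j))
    · rw [mapDomain_altCycle, sub_self]
      exact zero_mem _
  have hZ0 : Z0 G (m+2) ≤ Isub G (m+1) := by
    rw [Z0]
    apply Submodule.span_le.mpr
    rintro x ⟨g, hg, rfl⟩
    obtain ⟨w, hw0, hwb⟩ := key g hg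
    have hx : altCycle G g = (altCycle G g - Finsupp.mapDomain
        (fun t : Fin (m+2) → ↥(Subgroup.closure (Set.range g)) => fun i => ((t i : G))) w)
        + Finsupp.mapDomain
        (fun t : Fin (m+2) → ↥(Subgroup.closure (Set.range g)) => fun i => ((t i : G))) w := by
      abel
    rw [hx]
    refine add_mem (Submodule.mem_sup_left hwb) (Submodule.mem_sup_right ?_)
    apply Submodule.subset_span
    refine ⟨Subgroup.closure (Set.range g), ?_, w, hw0, rfl⟩
    exact closure_comm (fun a ha b hb => by
      obtain ⟨i, rfl⟩ := ha; obtain ⟨j, rfl⟩ := hb; exact hg i j)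
  exact ⟨key, hZ0, sup_le hZ0 le_sup_left⟩
end

section
/- Let G_1 and G_2 be finite untwisted groups (i.e., Br^2(G_i) = H^2(G_i,U(1)) ≠ 1 for i = 1,2) whose orders are coprime: gcd(|G_1|,|G_2|) = 1. Then G_1 × G_2 is untwisted, i.e., every class in H^2(G_1 × G_2, U(1)) is untwisted: Br^2(G_1 × G_2) = H^2(G_1 × G_2, U(1)) ≠ 1. -/
namespace DT

variable {G : Type*} [Group G]

/-- The (inhomogeneous bar) 2-cocycle identity for a `U(1)`-valued 2-cochain, written
multiplicatively: `ω(g₂,g₃)·ω(g₁,g₂g₃) = ω(g₁g₂,g₃)·ω(g₁,g₂)`. -/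
def IsCocycle2 (ω : G → G → Circle) : Prop :=
  ∀ g₁ g₂ g₃ : G, ω g₂ g₃ * ω g₁ (g₂ * g₃) = ω (g₁ * g₂) g₃ * ω g₁ g₂

/-- A `U(1)`-valued 2-coboundary: `ω(g₁,g₂) = α(g₂)·α(g₁g₂)⁻¹·α(g₁)`. -/
def IsCoboundary2 (ω : G → G → Circle) : Prop :=
  ∃ α : G → Circle, ∀ g₁ g₂ : G, ω g₁ g₂ = α g₂ * (α (g₁ * g₂))⁻¹ * α g₁

/-- A 2-cochain is untwisted if `ω(g,h) = ω(h,g)` for all commuting pairs. -/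
def Untwisted2 (ω : G → G → Circle) : Prop :=
  ∀ g h : G, g * h = h * g → ω g h = ω h g

end DT

open DT in
/-- A finite group is untwisted if every 2-cocycle class is untwisted and
`H²(G,U(1))` is non-trivial. -/
def UntwistedGroup (G : Type*) [Group G] : Prop :=
  (∀ ω : G → G → Circle, IsCocycle2 ω → Untwisted2 ω) ∧
  (∃ ω : G → G → Circle, IsCocycle2 ω ∧ ¬ IsCoboundary2 ω)

/-!
For a 2-cocycle `ω`, the commutator pairing `ω(g,h) / ω(h,g)` is multiplicative in each
variable on commuting elements. On `G₁ × G₂` a commuting pair splits into commuting pairs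
inside `G₁`, inside `G₂`, and mixed pairs `((u,1),(1,v))`. The first two pairings vanish because
the factors are untwisted; a mixed pairing is killed by both `|G₁|` and `|G₂|`, hence trivial by
coprimality. A non-trivial class of `G₁` inflates to a non-trivial class of the product, since
restricting back along `G₁ → G₁ × G₂` recovers it.
-/

namespace DT

variable {G H : Type*} {ω : G → G → Circle}

noncomputable def commPairing (ω : G → G → Circle) (g h : G) : Circle := ω g h / ω h g

theorem commPairing_swap (g h : G) : commPairing ω h g = (commPairing ω g h)⁻¹ :=
  (inv_div _ _).symm

variable [Group G] [Group H]

theorem IsCocycle2.comp (hω : IsCocycle2 ω) (f : H →* G) :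
    IsCocycle2 fun a b => ω (f a) (f b) := by
  intro a b c
  simpa only [map_mul] using hω (f a) (f b) (f c)

theorem IsCoboundary2.comp (hω : IsCoboundary2 ω) (f : H →* G) :
    IsCoboundary2 fun a b => ω (f a) (f b) := by
  obtain ⟨α, hα⟩ := hω
  exact ⟨fun a => α (f a), fun a b => by simpa only [map_mul] using hα (f a) (f b)⟩

theorem IsCocycle2.apply_one_left (hω : IsCocycle2 ω) (g : G) : ω 1 g = ω 1 1 := by
  simpa only [mul_one, one_mul, mul_left_cancel_iff] using hω 1 1 g

theorem IsCocycle2.apply_one_right (hω : IsCocycle2 ω) (g : G) : ω g 1 = ω 1 1 := by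
  simpa only [mul_one, one_mul, mul_right_cancel_iff, eq_comm] using hω g 1 1

theorem untwisted2_iff_commPairing :
    Untwisted2 ω ↔ ∀ g h : G, Commute g h → commPairing ω g h = 1 := by
  simp only [Untwisted2, commPairing, div_eq_one]
  rfl

theorem commPairing_one_left (hω : IsCocycle2 ω) (h : G) : commPairing ω 1 h = 1 := by
  rw [commPairing, hω.apply_one_left h, hω.apply_one_right h, div_self']

theorem commPairing_mul_left (hω : IsCocycle2 ω) {a b c : G}
    (hac : Commute a c) (hbc : Commute b c) :
    commPairing ω (a * b) c = commPairing ω a c * commPairing ω b c := by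
  have h₁ := congr_arg ((↑) : Circle → ℂ) (hω a b c)
  have h₂ := congr_arg ((↑) : Circle → ℂ) (hω c a b)
  have h₃ := congr_arg ((↑) : Circle → ℂ) (hω a c b)
  rw [hac.eq, ← hbc.eq] at h₃
  -- The three cocycle identities at `(a,b,c)`, `(c,a,b)`, `(a,c,b)` give the claim times `ω a b`.
  have key : ω (a * b) c * (ω c a * ω c b) * ω a b = ω a c * ω b c * ω c (a * b) * ω a b := by
    apply Circle.ext
    simp only [Circle.coe_mul] at h₁ h₂ h₃ ⊢
    linear_combination (-(ω c a * ω c b : ℂ)) * h₁ - (ω a c * ω b c : ℂ) * h₂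
      + (ω b c * ω c a : ℂ) * h₃
  rw [commPairing, commPairing, commPairing, div_mul_div_comm, div_eq_div_iff_mul_eq_mul]
  exact mul_right_cancel key

theorem commPairing_mul_right (hω : IsCocycle2 ω) {a b c : G}
    (hca : Commute c a) (hcb : Commute c b) :
    commPairing ω c (a * b) = commPairing ω c a * commPairing ω c b := by
  rw [commPairing_swap, commPairing_mul_left hω hca.symm hcb.symm, mul_inv,
    ← commPairing_swap, ← commPairing_swap]

theorem commPairing_pow_left (hω : IsCocycle2 ω) {a c : G} (hac : Commute a c) (n : ℕ) :
    commPairing ω (a ^ n) c = commPairing ω a c ^ n := by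
  induction n with
  | zero => rw [pow_zero, pow_zero, commPairing_one_left hω]
  | succ n ih => rw [pow_succ, commPairing_mul_left hω (hac.pow_left n) hac, ih, pow_succ]

theorem commPairing_eq_one_of_pow_eq_one (hω : IsCocycle2 ω) {g h : G} (hgh : Commute g h)
    {m n : ℕ} (hm : g ^ m = 1) (hn : h ^ n = 1) (hmn : m.Coprime n) :
    commPairing ω g h = 1 := by
  have hzm : commPairing ω g h ^ m = 1 := by
    rw [← commPairing_pow_left hω hgh, hm, commPairing_one_left hω]
  have hzn : commPairing ω g h ^ n = 1 := by
    rw [← inv_inj, ← inv_pow, ← commPairing_swap, ← commPairing_pow_left hω hgh.symm, hn,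
      commPairing_one_left hω, inv_one]
  exact orderOf_eq_one_iff.mp <| Nat.eq_one_of_dvd_coprimes hmn
    (orderOf_dvd_of_pow_eq_one hzm) (orderOf_dvd_of_pow_eq_one hzn)

theorem untwisted2_prod {G₁ G₂ : Type*} [Group G₁] [Group G₂] {ω : G₁ × G₂ → G₁ × G₂ → Circle}
    (hω : IsCocycle2 ω)
    (h₁ : Untwisted2 fun a b => ω (MonoidHom.inl G₁ G₂ a) (MonoidHom.inl G₁ G₂ b))
    (h₂ : Untwisted2 fun a b => ω (MonoidHom.inr G₁ G₂ a) (MonoidHom.inr G₁ G₂ b))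
    (hmixed : ∀ u v, commPairing ω (MonoidHom.inl G₁ G₂ u) (MonoidHom.inr G₁ G₂ v) = 1) :
    Untwisted2 ω := by
  rw [untwisted2_iff_commPairing] at h₁ h₂ ⊢
  rintro ⟨a₁, a₂⟩ ⟨b₁, b₂⟩ hab
  have hab₁ : Commute a₁ b₁ := congr_arg Prod.fst hab.eq
  have hab₂ : Commute a₂ b₂ := congr_arg Prod.snd hab.eq
  set x₁ := MonoidHom.inl G₁ G₂ a₁
  set x₂ := MonoidHom.inr G₁ G₂ a₂
  set y₁ := MonoidHom.inl G₁ G₂ b₁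
  set y₂ := MonoidHom.inr G₁ G₂ b₂
  have hx : (a₁, a₂) = x₁ * x₂ := (Prod.fst_mul_snd _).symm
  have hy : (b₁, b₂) = y₁ * y₂ := (Prod.fst_mul_snd _).symm
  have hx₁y₁ : Commute x₁ y₁ := hab₁.map _
  have hx₂y₂ : Commute x₂ y₂ := hab₂.map _
  have hx₁y₂ : Commute x₁ y₂ := MonoidHom.commute_inl_inr _ _
  have hy₁x₂ : Commute y₁ x₂ := MonoidHom.commute_inl_inr _ _
  have hpair₁ : commPairing ω x₁ y₁ = 1 := h₁ a₁ b₁ hab₁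
  have hpair₂ : commPairing ω x₂ y₂ = 1 := h₂ a₂ b₂ hab₂
  have hx₁y : Commute x₁ (b₁, b₂) := hy ▸ hx₁y₁.mul_right hx₁y₂
  have hx₂y : Commute x₂ (b₁, b₂) := hy ▸ hy₁x₂.symm.mul_right hx₂y₂
  rw [hx, commPairing_mul_left hω hx₁y hx₂y, hy, commPairing_mul_right hω hx₁y₁ hx₁y₂,
    commPairing_mul_right hω hy₁x₂.symm hx₂y₂, hpair₁, hpair₂, hmixed,
    commPairing_swap, hmixed]
  simp only [inv_one, mul_one]

end DT

open DT in
/-- a direct product of untwisted groups of coprime orders is untwisted. -/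
theorem stmt9 (G₁ G₂ : Type*) [Group G₁] [Group G₂] [Finite G₁] [Finite G₂]
    (hcop : Nat.Coprime (Nat.card G₁) (Nat.card G₂))
    (h₁ : UntwistedGroup G₁) (h₂ : UntwistedGroup G₂) :
    UntwistedGroup (G₁ × G₂) := by
  have hmixed (ω : G₁ × G₂ → G₁ × G₂ → Circle) (hω : IsCocycle2 ω) (u : G₁) (v : G₂) :
      commPairing ω (MonoidHom.inl G₁ G₂ u) (MonoidHom.inr G₁ G₂ v) = 1 :=
    commPairing_eq_one_of_pow_eq_one hω (MonoidHom.commute_inl_inr u v)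
      (by rw [← map_pow, pow_card_eq_one', map_one])
      (by rw [← map_pow, pow_card_eq_one', map_one]) hcop
  obtain ⟨ω₁, hω₁, hω₁_not_coboundary⟩ := h₁.2
  refine ⟨fun ω hω => ?_, fun g h => ω₁ g.1 h.1, hω₁.comp (MonoidHom.fst G₁ G₂), ?_⟩
  · exact untwisted2_prod hω (h₁.1 _ (hω.comp _)) (h₂.1 _ (hω.comp _)) (hmixed ω hω)
  · exact fun hb => hω₁_not_coboundary (hb.comp (MonoidHom.inl G₁ G₂))
end

section
/- Let G be a finite group, p a prime, and S a Sylow p-subgroup of G. The cohomological restriction map H^2(G,U(1)) → H^2(S,U(1)) maps Br^2(G) into Br^2(S), and its restriction to the p-primary component of Br^2(G) is injective; that is, the p-part of Br^2(G) embeds into Br^2(S). -/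
namespace DT

variable (G : Type*) [Group G]

/-- The 2-cocycles, as a subgroup of the group of `U(1)`-valued 2-cochains. -/
noncomputable def cocycles2Sub : Subgroup (G → G → Circle) where
  carrier := {ω | IsCocycle2 ω}
  one_mem' := by intro g₁ g₂ g₃; simp
  mul_mem' := by
    intro ω ω' h h' g₁ g₂ g₃
    simp only [Pi.mul_apply]
    rw [mul_mul_mul_comm, h g₁ g₂ g₃, h' g₁ g₂ g₃, mul_mul_mul_comm]
  inv_mem' := by
    intro ω h g₁ g₂ g₃
    simp only [Pi.inv_apply, ← mul_inv]
    rw [h g₁ g₂ g₃]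

/-- The 2-coboundary map `α ↦ δα`, `(δα)(g₁,g₂) = α(g₂)·α(g₁g₂)⁻¹·α(g₁)`. -/
noncomputable def d1hom : (G → Circle) →* (G → G → Circle) where
  toFun α := fun g₁ g₂ => α g₂ * (α (g₁ * g₂))⁻¹ * α g₁
  map_one' := by funext g₁ g₂; simp
  map_mul' := by
    intro α β
    funext g₁ g₂
    simp only [Pi.mul_apply, mul_inv]
    group
    simp [mul_comm, mul_left_comm, mul_assoc]

/-- The 2-coboundaries, as a subgroup of the 2-cochains. -/
noncomputable def coboundaries2Sub : Subgroup (G → G → Circle) := (d1hom G).range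

/-- The untwisted 2-cocycles. -/
noncomputable def untwisted2Sub : Subgroup (G → G → Circle) where
  carrier := {ω | IsCocycle2 ω ∧ Untwisted2 ω}
  one_mem' := ⟨(cocycles2Sub G).one_mem, by intro g h _; rfl⟩
  mul_mem' := by
    intro ω ω' h h'
    exact ⟨(cocycles2Sub G).mul_mem h.1 h'.1, by
      intro g k hgk
      simp only [Pi.mul_apply, h.2 g k hgk, h'.2 g k hgk]⟩
  inv_mem' := by
    intro ω h
    exact ⟨(cocycles2Sub G).inv_mem h.1, by
      intro g k hgk
      simp only [Pi.inv_apply, h.2 g k hgk]⟩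

/-- `H²(G,U(1))`: 2-cocycles modulo 2-coboundaries. -/
def H2Grp := cocycles2Sub G ⧸ ((coboundaries2Sub G).subgroupOf (cocycles2Sub G))

noncomputable instance : CommGroup (H2Grp G) := by unfold H2Grp; infer_instance

/-- `Br²(G)`: the subgroup of `H²(G,U(1))` of classes of untwisted cocycles. -/
noncomputable def Br2Sub : Subgroup (H2Grp G) :=
  Subgroup.map (QuotientGroup.mk' ((coboundaries2Sub G).subgroupOf (cocycles2Sub G)))
    ((untwisted2Sub G).subgroupOf (cocycles2Sub G))

variable {G}
variable {K : Type*} [Group K]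

/-- Restriction of 2-cocycles along a group homomorphism. -/
noncomputable def res2Cocycle (f : K →* G) : cocycles2Sub G →* cocycles2Sub K where
  toFun ω := ⟨fun a b => (ω : G → G → Circle) (f a) (f b), by
    intro a b c
    simpa [map_mul] using ω.2 (f a) (f b) (f c)⟩
  map_one' := rfl
  map_mul' := fun _ _ => rfl

/-- The restriction map `H²(G,U(1)) →* H²(K,U(1))` induced by `f : K →* G`. -/
noncomputable def res2 (f : K →* G) : H2Grp G →* H2Grp K :=
  QuotientGroup.lift _
    ((QuotientGroup.mk' ((coboundaries2Sub K).subgroupOf (cocycles2Sub K))).comp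
      (res2Cocycle f))
    (by
      intro ω hω
      obtain ⟨α, hα⟩ := MonoidHom.mem_range.mp (Subgroup.mem_subgroupOf.mp hω)
      have hmem : res2Cocycle f ω ∈ (coboundaries2Sub K).subgroupOf (cocycles2Sub K) := by
        rw [Subgroup.mem_subgroupOf]
        refine MonoidHom.mem_range.mpr ⟨α ∘ f, ?_⟩
        funext a b
        have h2 := congrFun (congrFun hα (f a)) (f b)
        simpa [d1hom, res2Cocycle, map_mul] using h2
      exact (QuotientGroup.eq_one_iff _).mpr hmem)

end DT

namespace DT

variable {G : Type*} [Group G]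

section Transfer

variable (S : Subgroup G)

noncomputable def cosetFactor (g : G) (q : G ⧸ S) : S :=
  ⟨(g • q).out⁻¹ * (g * q.out), QuotientGroup.eq.mp <| by
    rw [QuotientGroup.out_eq']
    conv_lhs => rw [← QuotientGroup.out_eq' q]
    rfl⟩

theorem mul_out_eq_out_mul_cosetFactor (g : G) (q : G ⧸ S) :
    g * q.out = (g • q).out * cosetFactor S g q := by
  rw [cosetFactor, mul_inv_cancel_left]

theorem cosetFactor_mul (g h : G) (q : G ⧸ S) :
    cosetFactor S (g * h) q = cosetFactor S g (h • q) * cosetFactor S h q := by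
  ext
  simp only [cosetFactor, Subgroup.coe_mul, mul_smul]
  group

noncomputable def transferSummand (ω : G → G → Circle) (α : S → Circle) (g : G)
    (q : G ⧸ S) : Circle :=
  α (cosetFactor S g q) * ω g q.out * (ω (g • q).out (cosetFactor S g q))⁻¹

variable {S}

theorem IsCocycle2.eq_transferSummand {ω : G → G → Circle} (hω : IsCocycle2 ω)
    {α : S → Circle} (hα : ∀ s₁ s₂ : S, ω s₁ s₂ = α s₂ * (α (s₁ * s₂))⁻¹ * α s₁)
    (g h : G) (q : G ⧸ S) :
    ω g h = transferSummand S ω α h q * (transferSummand S ω α (g * h) q)⁻¹ *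
      transferSummand S ω α g (h • q) := by
  set u := cosetFactor S h q
  set v := cosetFactor S g (h • q)
  have c₁ := hω g h q.out
  have c₂ := hω g (h • q).out u
  have c₃ := hω (g • h • q).out v u
  have c₄ := hα v u
  rw [mul_out_eq_out_mul_cosetFactor] at c₁
  rw [mul_out_eq_out_mul_cosetFactor] at c₂
  simp only [transferSummand, cosetFactor_mul, mul_smul, Subgroup.coe_mul]
  apply Additive.ofMul.injective
  apply_fun Additive.ofMul at c₁ c₂ c₃ c₄
  simp only [ofMul_mul, ofMul_inv] at *
  linear_combination (norm := abel) c₂ - c₁ - c₃ + c₄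

theorem IsCocycle2.isCoboundary2_pow_index [S.FiniteIndex] {ω : G → G → Circle}
    (hω : IsCocycle2 ω) {α : S → Circle}
    (hα : ∀ s₁ s₂ : S, ω s₁ s₂ = α s₂ * (α (s₁ * s₂))⁻¹ * α s₁) :
    IsCoboundary2 (ω ^ S.index) := by
  let : Fintype (G ⧸ S) := Fintype.ofFinite _
  refine ⟨fun g => ∏ q : G ⧸ S, transferSummand S ω α g q, fun g h => ?_⟩
  have hcard : S.index = Fintype.card (G ⧸ S) := by
    rw [Subgroup.index, Nat.card_eq_fintype_card]
  calc (ω ^ S.index) g h = ∏ q : G ⧸ S, ω g h := by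
        rw [Finset.prod_const, Finset.card_univ, ← hcard, Pi.pow_apply, Pi.pow_apply]
    _ = ∏ q : G ⧸ S, transferSummand S ω α h q * (transferSummand S ω α (g * h) q)⁻¹ *
          transferSummand S ω α g (h • q) :=
        Finset.prod_congr rfl fun q _ => hω.eq_transferSummand hα g h q
    _ = _ := by
        rw [Finset.prod_mul_distrib, Finset.prod_mul_distrib, Finset.prod_inv_distrib]
        exact congrArg _ (Equiv.prod_comp (MulAction.toPerm h) (transferSummand S ω α g))

end Transfer

section Cohomology

variable {K : Type*} [Group K]

noncomputable abbrev H2Grp.mk : cocycles2Sub G →* H2Grp G :=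
  QuotientGroup.mk' ((coboundaries2Sub G).subgroupOf (cocycles2Sub G))

theorem mem_coboundaries2Sub_iff {ω : G → G → Circle} :
    ω ∈ coboundaries2Sub G ↔ IsCoboundary2 ω := by
  simp only [coboundaries2Sub, MonoidHom.mem_range, IsCoboundary2, funext_iff]
  exact exists_congr fun α => forall₂_congr fun g₁ g₂ => eq_comm

theorem H2Grp.mk_eq_one_iff {ω : cocycles2Sub G} :
    H2Grp.mk ω = 1 ↔ IsCoboundary2 (ω : G → G → Circle) :=
  (QuotientGroup.eq_one_iff ω).trans (Subgroup.mem_subgroupOf.trans mem_coboundaries2Sub_iff)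

theorem H2Grp.mk_surjective : Function.Surjective (H2Grp.mk : cocycles2Sub G →* H2Grp G) :=
  QuotientGroup.mk'_surjective _

theorem res2_mem_Br2Sub (f : K →* G) {x : H2Grp G} (hx : x ∈ Br2Sub G) :
    res2 f x ∈ Br2Sub K := by
  obtain ⟨ω, hω, rfl⟩ := hx
  refine ⟨res2Cocycle f ω, ⟨(res2Cocycle f ω).2, fun a b hab => ?_⟩, rfl⟩
  exact hω.2 (f a) (f b) (by rw [← map_mul, hab, map_mul])

theorem pow_index_eq_one_of_res2_eq_one (S : Subgroup G) [S.FiniteIndex] {x : H2Grp G}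
    (hx : res2 S.subtype x = 1) : x ^ S.index = 1 := by
  obtain ⟨ω, rfl⟩ := H2Grp.mk_surjective x
  obtain ⟨α, hα⟩ := H2Grp.mk_eq_one_iff.mp hx
  rw [← map_pow, H2Grp.mk_eq_one_iff]
  exact ω.2.isCoboundary2_pow_index hα

end Cohomology

end DT

open DT in
/-- restriction to a Sylow `p`-subgroup maps `Br²(G)` into `Br²(S)` and is
injective on the `p`-primary component of `Br²(G)`. -/
theorem stmt11 (G : Type*) [Group G] [Finite G] (p : ℕ) [Fact p.Prime] (P : Sylow p G) :
    (∀ x ∈ Br2Sub G, res2 (P : Subgroup G).subtype x ∈ Br2Sub ↥(P : Subgroup G)) ∧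
    ∀ x ∈ Br2Sub G, (∃ k : ℕ, x ^ (p ^ k) = 1) →
      res2 (P : Subgroup G).subtype x = 1 → x = 1 := by
  refine ⟨fun x hx => res2_mem_Br2Sub _ hx, fun x _ ⟨k, hk⟩ hres => ?_⟩
  have hindex : x ^ (P : Subgroup G).index = 1 := pow_index_eq_one_of_res2_eq_one _ hres
  have hcoprime : Nat.Coprime (p ^ k) (P : Subgroup G).index :=
    Nat.Coprime.pow_left k ((Nat.Prime.coprime_iff_not_dvd Fact.out).mpr P.not_dvd_index)
  simpa [hcoprime] using pow_gcd_eq_one.mpr ⟨hk, hindex⟩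
end

section
/- Let G be a finite group. Then Br^2(G) = Sha^2(G): a class [ω] ∈ H^2(G,U(1)) is untwisted (i.e., ω(g,h) = ω(h,g) for all commuting pairs g,h ∈ G, for some, equivalently any, representative cocycle ω) if and only if the restriction of [ω] to H^2(B,U(1)) is trivial for every abelian subgroup B ≤ G. -/
namespace DTAux

/-- `Circle.exp t ^ k = Circle.exp (k • t)`. -/
lemma circle_exp_pow (t : ℝ) (k : ℕ) : Circle.exp t ^ k = Circle.exp (k * t) := by
  induction k with
  | zero => simp
  | succ k ih => rw [pow_succ, ih, ← Circle.exp_add]; congr 1; push_cast; ring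

/-- The circle group is divisible. -/
lemma circle_root (m : ℕ) (hm : m ≠ 0) (z : Circle) : ∃ u : Circle, u ^ m = z := by
  have hme : (m : ℝ) ≠ 0 := Nat.cast_ne_zero.mpr hm
  refine ⟨Circle.exp (Complex.arg z / m), ?_⟩
  rw [circle_exp_pow, mul_div_cancel₀ _ hme, Circle.exp_arg]

universe u

/-- A divisible central `Circle` inside a commutative group with finite quotient admits a
retraction. Induction on the cardinality of the quotient. -/
lemma retraction : ∀ (n : ℕ) (E : Type u) [CommGroup E] (i : Circle →* E),
    Function.Injective i → (hfin : Finite (E ⧸ i.range)) →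
    Nat.card (E ⧸ i.range) = n →
    ∃ r : E →* Circle, ∀ u, r (i u) = u := by
  intro n
  induction n using Nat.strong_induction_on with
  | _ n IH =>
    intro E _ i hi hfin hcard
    by_cases htop : i.range = ⊤
    · -- i is an isomorphism
      have hsurj : Function.Surjective i := MonoidHom.range_eq_top.mp htop
      let e := MulEquiv.ofBijective i ⟨hi, hsurj⟩
      exact ⟨e.symm.toMonoidHom, fun u => e.symm_apply_apply u⟩
    · -- pick a nontrivial element of the quotient
      obtain ⟨x, hx⟩ : ∃ x : E, x ∉ i.range := by
        by_contra hcon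
        push_neg at hcon
        exact htop ((Subgroup.eq_top_iff' i.range).mpr hcon)
      have hxbar : (QuotientGroup.mk x : E ⧸ i.range) ≠ 1 := by
        simpa [QuotientGroup.eq_one_iff] using hx
      set xbar : E ⧸ i.range := QuotientGroup.mk x with hxbardef
      have hm0 : orderOf xbar ≠ 0 := (orderOf_pos xbar).ne'
      set m : ℕ := orderOf xbar with hmdef
      -- x ^ m lands in the range of i
      have hxm : x ^ m ∈ i.range := by
        rw [← QuotientGroup.eq_one_iff]
        have : (QuotientGroup.mk (x ^ m) : E ⧸ i.range) = xbar ^ m :=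
          map_pow (QuotientGroup.mk' i.range) x m
        rw [this, hmdef, pow_orderOf_eq_one]
      obtain ⟨d, hd⟩ := hxm
      obtain ⟨w, hw⟩ := circle_root m hm0 d
      set y : E := x * (i w)⁻¹ with hydef
      have hym : y ^ m = 1 := by
        rw [hydef, mul_pow, inv_pow, ← map_pow, hw, hd, mul_inv_cancel]
      have hymk : (QuotientGroup.mk y : E ⧸ i.range) = xbar := by
        rw [hydef]
        have h1 : (QuotientGroup.mk ((i w)⁻¹) : E ⧸ i.range) = 1 := by
          rw [QuotientGroup.eq_one_iff]; exact inv_mem ⟨w, rfl⟩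
        have h2 : (QuotientGroup.mk (x * (i w)⁻¹) : E ⧸ i.range)
            = QuotientGroup.mk x * QuotientGroup.mk ((i w)⁻¹) := rfl
        rw [h2, h1, mul_one]
      set N : Subgroup E := Subgroup.zpowers y with hNdef
      set i' : Circle →* E ⧸ N := (QuotientGroup.mk' N).comp i with hi'def
      -- i' is injective
      have hi' : Function.Injective i' := by
        rw [injective_iff_map_eq_one]
        intro a ha
        have hmem : i a ∈ N := by
          rw [← QuotientGroup.eq_one_iff]; exact ha
        obtain ⟨k, hk⟩ := Subgroup.mem_zpowers_iff.mp hmem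
        have hbark : xbar ^ k = 1 := by
          rw [← hymk]
          have h1 : ((QuotientGroup.mk' i.range) y) ^ k
              = (QuotientGroup.mk' i.range) (y ^ k) := (map_zpow _ y k).symm
          show ((QuotientGroup.mk' i.range) y) ^ k = 1
          rw [h1, hk, QuotientGroup.mk'_apply, QuotientGroup.eq_one_iff]
          exact ⟨a, rfl⟩
        have hdvd : (m : ℤ) ∣ k := orderOf_dvd_iff_zpow_eq_one.mpr hbark
        obtain ⟨t, ht⟩ := hdvd
        have hyk : y ^ k = 1 := by
          rw [ht, zpow_mul, zpow_natCast, hym, one_zpow]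
        have hia : i a = 1 := by rw [← hk, hyk]
        exact hi (by rw [hia, map_one])
      -- the induced surjection between the quotients
      have hle : i.range ≤ i'.range.comap (QuotientGroup.mk' N) := by
        rintro e ⟨a, rfl⟩
        exact ⟨a, rfl⟩
      set φ : (E ⧸ i.range) →* ((E ⧸ N) ⧸ i'.range) :=
        QuotientGroup.map i.range i'.range (QuotientGroup.mk' N) hle with hφdef
      have hφsurj : Function.Surjective φ := by
        intro z
        induction z using QuotientGroup.induction_on with
        | H z' =>
          induction z' using QuotientGroup.induction_on with
          | H e => exact ⟨QuotientGroup.mk e, rfl⟩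
      have hφx : φ xbar = 1 := by
        have hxyw : x = y * i w := by rw [hydef, inv_mul_cancel_right]
        have h1 : φ xbar = QuotientGroup.mk (QuotientGroup.mk x : E ⧸ N) := rfl
        rw [h1, QuotientGroup.eq_one_iff]
        refine ⟨w, ?_⟩
        show (QuotientGroup.mk (i w) : E ⧸ N) = QuotientGroup.mk x
        rw [hxyw]
        have hyN : (QuotientGroup.mk y : E ⧸ N) = 1 := by
          rw [QuotientGroup.eq_one_iff]; exact Subgroup.mem_zpowers y
        have h2 : (QuotientGroup.mk (y * i w) : E ⧸ N)
            = QuotientGroup.mk y * QuotientGroup.mk (i w) := rfl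
        rw [h2, hyN, one_mul]
      have hφnotinj : ¬ Function.Injective φ := by
        intro hinj
        exact hxbar (hinj (by rw [hφx, map_one]))
      have hfin' : Finite ((E ⧸ N) ⧸ i'.range) := Finite.of_surjective φ hφsurj
      -- cardinality drops strictly
      have hlt : Nat.card ((E ⧸ N) ⧸ i'.range) < n := by
        letI : Fintype (E ⧸ i.range) := Fintype.ofFinite _
        letI : Fintype ((E ⧸ N) ⧸ i'.range) := Fintype.ofFinite _
        rw [← hcard, Nat.card_eq_fintype_card, Nat.card_eq_fintype_card]
        exact Fintype.card_lt_of_surjective_not_injective φ hφsurj hφnotinj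
      obtain ⟨r', hr'⟩ := IH _ hlt (E ⧸ N) i' hi' hfin' rfl
      exact ⟨r'.comp (QuotientGroup.mk' N), fun u => hr' u⟩

/-- Underlying type of the central extension of `A` by `Circle` along `σ`. -/
structure ExtT (A : Type u) where
  u : Circle
  a : A

variable {A : Type u} [Group A] (σ : A → A → Circle)

/-- The commutative group structure on `Circle × A` twisted by a normalized symmetric
2-cocycle `σ` on a commutative `A`. -/
noncomputable def extGroup
    (hcoc : ∀ a b c : A, σ b c * σ a (b * c) = σ (a * b) c * σ a b)
    (h1l : ∀ a : A, σ 1 a = 1) (h1r : ∀ a : A, σ a 1 = 1)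
    (hsymm : ∀ a b : A, σ a b = σ b a)
    (hcomm : ∀ a b : A, a * b = b * a) : CommGroup (ExtT A) where
  mul p q := ⟨p.u * q.u * σ p.a q.a, p.a * q.a⟩
  one := ⟨1, 1⟩
  inv p := ⟨(p.u * σ p.a p.a⁻¹)⁻¹, p.a⁻¹⟩
  mul_assoc p q r := by
    show (ExtT.mk _ _ : ExtT A) = ExtT.mk _ _
    have hcc := hcoc p.a q.a r.a
    congr 1
    · show p.u * q.u * σ p.a q.a * r.u * σ (p.a * q.a) r.a
        = p.u * (q.u * r.u * σ q.a r.a) * σ p.a (q.a * r.a)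
      calc p.u * q.u * σ p.a q.a * r.u * σ (p.a * q.a) r.a
          = p.u * q.u * r.u * (σ (p.a * q.a) r.a * σ p.a q.a) := by
            simp only [mul_comm, mul_left_comm, mul_assoc]
        _ = p.u * q.u * r.u * (σ q.a r.a * σ p.a (q.a * r.a)) := by rw [← hcc]
        _ = p.u * (q.u * r.u * σ q.a r.a) * σ p.a (q.a * r.a) := by
            simp only [mul_comm, mul_left_comm, mul_assoc]
    · exact mul_assoc _ _ _
  one_mul p := by
    show (ExtT.mk (1 * p.u * σ 1 p.a) (1 * p.a) : ExtT A) = p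
    simp only [h1l, one_mul, mul_one]
  mul_one p := by
    show (ExtT.mk (p.u * 1 * σ p.a 1) (p.a * 1) : ExtT A) = p
    simp only [h1r, one_mul, mul_one]
  inv_mul_cancel p := by
    show (ExtT.mk ((p.u * σ p.a p.a⁻¹)⁻¹ * p.u * σ p.a⁻¹ p.a) (p.a⁻¹ * p.a) : ExtT A)
      = ExtT.mk 1 1
    congr 1
    · rw [hsymm p.a⁻¹ p.a]
      group
    · exact inv_mul_cancel p.a
  mul_comm p q := by
    show (ExtT.mk _ _ : ExtT A) = ExtT.mk _ _
    congr 1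
    · show p.u * q.u * σ p.a q.a = q.u * p.u * σ q.a p.a
      rw [hsymm p.a q.a, mul_comm p.u q.u]
    · exact hcomm p.a q.a

/-- A symmetric normalized 2-cocycle on a finite "commutative" group with values in the
circle is a coboundary. -/
lemma sym_cocycle_coboundary [Finite A]
    (hcoc : ∀ a b c : A, σ b c * σ a (b * c) = σ (a * b) c * σ a b)
    (h1l : ∀ a : A, σ 1 a = 1) (h1r : ∀ a : A, σ a 1 = 1)
    (hsymm : ∀ a b : A, σ a b = σ b a)
    (hcomm : ∀ a b : A, a * b = b * a) :
    ∃ ρ : A → Circle, ∀ a b : A, σ a b = ρ a * ρ b * (ρ (a * b))⁻¹ := by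
  letI : CommGroup (ExtT A) := extGroup σ hcoc h1l h1r hsymm hcomm
  -- the canonical injection
  have imul : ∀ u v : Circle, (ExtT.mk (u * v) (1 : A)) = ExtT.mk u 1 * ExtT.mk v 1 := by
    intro u v
    show ExtT.mk (u * v) 1 = ExtT.mk (u * v * σ 1 1) (1 * 1)
    simp only [h1l, one_mul, mul_one]
  let i : Circle →* ExtT A :=
    { toFun := fun u => ExtT.mk u 1
      map_one' := rfl
      map_mul' := imul }
  have hi : Function.Injective i := by
    intro u v huv
    exact congrArg ExtT.u huv
  -- the canonical projection
  let π : ExtT A →* A :=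
    { toFun := ExtT.a
      map_one' := rfl
      map_mul' := fun p q => rfl }
  have hπ : Function.Surjective π := fun a => ⟨ExtT.mk 1 a, rfl⟩
  have hrangeker : i.range = π.ker := by
    ext p
    constructor
    · rintro ⟨u, rfl⟩; rfl
    · intro hp
      refine ⟨p.u, ?_⟩
      have ha1 : p.a = 1 := hp
      show ExtT.mk p.u 1 = p
      rw [← ha1]
  have hfin : Finite (ExtT A ⧸ i.range) := by
    rw [hrangeker]
    exact Finite.of_equiv A (QuotientGroup.quotientKerEquivOfSurjective π hπ).symm.toEquiv
  obtain ⟨r, hr⟩ := retraction (Nat.card (ExtT A ⧸ i.range)) (ExtT A) i hi hfin rfl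
  refine ⟨fun a => r (ExtT.mk 1 a), fun a b => ?_⟩
  have hmul : (ExtT.mk (1 : Circle) a) * ExtT.mk (1 : Circle) b
      = i (σ a b) * ExtT.mk (1 : Circle) (a * b) := by
    show ExtT.mk ((1 : Circle) * 1 * σ a b) (a * b)
      = ExtT.mk (σ a b * 1 * σ 1 (a * b)) (1 * (a * b))
    simp only [h1l, one_mul, mul_one]
  have hkey := congrArg r hmul
  rw [map_mul, map_mul, hr] at hkey
  show σ a b = r (ExtT.mk 1 a) * r (ExtT.mk 1 b) * (r (ExtT.mk 1 (a * b)))⁻¹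
  rw [hkey, mul_inv_cancel_right]

end DTAux

open DT in
/-- `Br²(G) = Sha²(G)`: a 2-cocycle is untwisted iff its restriction to
every abelian subgroup is a coboundary. -/
theorem stmt17 (G : Type*) [Group G] [Finite G] (ω : G → G → Circle)
    (hc : IsCocycle2 ω) :
    Untwisted2 ω ↔
      ∀ B : Subgroup G, (∀ a ∈ B, ∀ b ∈ B, a * b = b * a) →
        IsCoboundary2 (fun a b : B => ω (a : G) (b : G)) := by
  have hone_l : ∀ g : G, ω 1 g = ω 1 1 := by
    intro g
    have h := hc 1 1 g
    simp only [one_mul] at h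
    exact mul_left_cancel h
  have hone_r : ∀ g : G, ω g 1 = ω 1 1 := by
    intro g
    have h := hc g 1 1
    simp only [mul_one] at h
    exact (mul_right_cancel h).symm
  constructor
  · -- untwisted → coboundary on abelian subgroups
    intro hU B hB
    set c : Circle := ω 1 1 with hcdef
    set σ : B → B → Circle := fun a b => ω (a : G) (b : G) * c⁻¹ with hσdef
    have hcoc : ∀ a b d : B, σ b d * σ a (b * d) = σ (a * b) d * σ a b := by
      intro a b d
      have h := hc (a : G) (b : G) (d : G)
      show ω (b : G) (d : G) * c⁻¹ * (ω (a : G) ((b : G) * (d : G)) * c⁻¹)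
          = ω ((a : G) * (b : G)) (d : G) * c⁻¹ * (ω (a : G) (b : G) * c⁻¹)
      rw [mul_mul_mul_comm, mul_mul_mul_comm (ω ((a : G) * (b : G)) (d : G)), h]
    have h1l : ∀ a : B, σ 1 a = 1 := by
      intro a
      show ω ((1 : B) : G) (a : G) * c⁻¹ = 1
      rw [OneMemClass.coe_one, hone_l, mul_inv_cancel]
    have h1r : ∀ a : B, σ a 1 = 1 := by
      intro a
      show ω (a : G) ((1 : B) : G) * c⁻¹ = 1
      rw [OneMemClass.coe_one, hone_r, mul_inv_cancel]
    have hsymm : ∀ a b : B, σ a b = σ b a := by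
      intro a b
      show ω (a : G) (b : G) * c⁻¹ = ω (b : G) (a : G) * c⁻¹
      rw [hU (a : G) (b : G) (hB _ a.2 _ b.2)]
    have hcomm : ∀ a b : B, a * b = b * a := by
      intro a b
      exact Subtype.ext (hB _ a.2 _ b.2)
    obtain ⟨ρ, hρ⟩ := DTAux.sym_cocycle_coboundary σ hcoc h1l h1r hsymm hcomm
    refine ⟨fun a => c * ρ a, fun a b => ?_⟩
    show ω (a : G) (b : G) = c * ρ b * (c * ρ (a * b))⁻¹ * (c * ρ a)
    have h1 : ω (a : G) (b : G) = σ a b * c := by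
      show ω (a : G) (b : G) = ω (a : G) (b : G) * c⁻¹ * c
      rw [inv_mul_cancel_right]
    rw [h1, hρ a b]
    simp only [mul_inv, mul_comm, mul_left_comm, mul_assoc, inv_mul_cancel_left,
      mul_inv_cancel_left, inv_mul_cancel, mul_inv_cancel, one_mul, mul_one]
  · -- coboundary on abelian subgroups → untwisted
    intro h g k hgk
    set B : Subgroup G := Subgroup.closure {g, k} with hBdef
    have hgB : g ∈ B := Subgroup.subset_closure (Set.mem_insert g {k})
    have hkB : k ∈ B := Subgroup.subset_closure (Set.mem_insert_of_mem g rfl)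
    have hcent : B ≤ Subgroup.centralizer {g, k} := by
      rw [hBdef]
      apply (Subgroup.closure_le _).mpr
      intro x hx
      simp only [SetLike.mem_coe]
      rw [Subgroup.mem_centralizer_iff]
      rcases hx with rfl | hx
      · rintro z (rfl | hz)
        · rfl
        · rw [Set.mem_singleton_iff] at hz; subst hz; exact hgk.symm
      · rw [Set.mem_singleton_iff] at hx; subst hx
        rintro z (rfl | hz)
        · exact hgk
        · rw [Set.mem_singleton_iff] at hz; subst hz; rfl
    have hB : ∀ a ∈ B, ∀ b ∈ B, a * b = b * a := by
      intro a ha b hb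
      have hga : g * a = a * g := (Subgroup.mem_centralizer_iff.mp (hcent ha)) g
        (Set.mem_insert g {k})
      have hka : k * a = a * k := (Subgroup.mem_centralizer_iff.mp (hcent ha)) k
        (Set.mem_insert_of_mem g rfl)
      have hsingle : B ≤ Subgroup.centralizer {a} := by
        rw [hBdef]
        apply (Subgroup.closure_le _).mpr
        intro x hx
        simp only [SetLike.mem_coe]
        rw [Subgroup.mem_centralizer_iff]
        rcases hx with rfl | hx
        · rintro z hz
          rw [Set.mem_singleton_iff] at hz; subst hz
          exact hga.symm
        · rw [Set.mem_singleton_iff] at hx; subst hx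
          rintro z hz
          rw [Set.mem_singleton_iff] at hz; subst hz
          exact hka.symm
      exact (Subgroup.mem_centralizer_iff.mp (hsingle hb)) a rfl
    obtain ⟨α, hα⟩ := h B hB
    have h1 := hα ⟨g, hgB⟩ ⟨k, hkB⟩
    have h2 := hα ⟨k, hkB⟩ ⟨g, hgB⟩
    have hmuleq : (⟨g, hgB⟩ * ⟨k, hkB⟩ : B) = ⟨k, hkB⟩ * ⟨g, hgB⟩ := Subtype.ext hgk
    simp only at h1 h2
    rw [h1, h2, hmuleq]
    simp only [mul_comm, mul_left_comm, mul_assoc]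
end
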